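/- In a degenerate Euclidean TSP instance (all points lie on a common line), every 2-optimal tour is an optimal tour. -/

import Mathlib

open Classical

/-- The `p`-norm distance between two points of `ℝ²`. For `p = 2` this is the
Euclidean distance. -/
noncomputable def pdist (p : ℝ) (a b : ℝ × ℝ) : ℝ :=
  (|a.1 - b.1| ^ p + |a.2 - b.2| ^ p) ^ (1 / p)

/-- The length of the closed polygon (cyclic sequence) given by the list `L`. -/
noncomputable def cycleLength (p : ℝ) (L : List (ℝ × ℝ)) : ℝ :=
  ((L.zip (L.rotate 1)).map fun e => pdist p e.1 e.2).sum

/-- `L` is a tour (Hamiltonian cycle) of the finite point set `V`. -/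
def IsTour (V : Finset (ℝ × ℝ)) (L : List (ℝ × ℝ)) : Prop :=
  L.Nodup ∧ L.toFinset = V

/-- The (oriented) tour `L` is 2-optimal: for any two distinct directed edges
`(a,b)` and `(x,y)` of the tour, `c(a,x) + c(b,y) ≥ c(a,b) + c(x,y)`. -/
def IsTwoOptimal (p : ℝ) (L : List (ℝ × ℝ)) : Prop :=
  ∀ e ∈ L.zip (L.rotate 1), ∀ f ∈ L.zip (L.rotate 1), e ≠ f →
    pdist p e.1 e.2 + pdist p f.1 f.2 ≤ pdist p e.1 f.1 + pdist p e.2 f.2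

/-- `L` is an optimal (shortest) tour for `V`. -/
def IsOptimalTour (p : ℝ) (V : Finset (ℝ × ℝ)) (L : List (ℝ × ℝ)) : Prop :=
  IsTour V L ∧ ∀ L' : List (ℝ × ℝ), IsTour V L' → cycleLength p L ≤ cycleLength p L'


/-!
Parametrize the line as `p = g p • d + p₀`. The Euclidean distance between points `u, v` of `V`
is then `|g u - g v|` times the length of `d`, so it suffices to compare tours of real numbers.
A tour through reals with minimum `m` and maximum `M` has length at least `2 * (M - m)`, since it
runs from `m` to `M` and back. In a 2-optimal tour, two distinct edges traversed in the same
direction cover disjoint intervals `[a, b)`: if they overlapped, exchanging them would shorten the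
tour. Hence the rightward edges have total length at most `M - m`, and so do the leftward ones.
-/

open MeasureTheory Set

section Tours

variable {α β : Type*}

noncomputable def tourCost (c : α → α → ℝ) (L : List α) : ℝ :=
  ((L.zip (L.rotate 1)).map fun e => c e.1 e.2).sum

def IsTwoOptimalFor (c : α → α → ℝ) (L : List α) : Prop :=
  ∀ e ∈ L.zip (L.rotate 1), ∀ f ∈ L.zip (L.rotate 1), e ≠ f →
    c e.1 e.2 + c f.1 f.2 ≤ c e.1 f.1 + c e.2 f.2

theorem mem_of_mem_zip_rotate_one {L : List α} {e : α × α} (he : e ∈ L.zip (L.rotate 1)) :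
    e.1 ∈ L ∧ e.2 ∈ L :=
  ⟨(List.of_mem_zip he).1, List.mem_rotate.1 (List.of_mem_zip he).2⟩

theorem tourCost_eq_sum_range (c : α → α → ℝ) {L : List α} (hL : 0 < L.length) :
    tourCost c L = ∑ i ∈ Finset.range L.length,
      c (L[i % L.length]'(Nat.mod_lt _ hL)) (L[(i + 1) % L.length]'(Nat.mod_lt _ hL)) := by
  have hlen : ((L.zip (L.rotate 1)).map fun e => c e.1 e.2).length = L.length := by simp
  rw [tourCost, ← Fin.sum_univ_getElem, Finset.sum_range, ← Fin.sum_congr' _ hlen]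
  refine Finset.sum_congr rfl fun i _ => ?_
  have hi : (i : ℕ) < L.length := hlen ▸ i.2
  simp [List.getElem_rotate, Nat.mod_eq_of_lt hi]

variable {c : β → β → ℝ} {c' : α → α → ℝ} {g : β → α} {k : ℝ} {L : List β}

theorem tourCost_eq_mul_tourCost_map (hc : ∀ u ∈ L, ∀ v ∈ L, c u v = k * c' (g u) (g v)) :
    tourCost c L = k * tourCost c' (L.map g) := by
  rw [tourCost, tourCost, ← List.map_rotate, List.zip_map, List.map_map,
    ← List.sum_map_mul_left]
  congr 1
  refine List.map_congr_left fun e he => ?_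
  exact hc _ (mem_of_mem_zip_rotate_one he).1 _ (mem_of_mem_zip_rotate_one he).2

theorem IsTwoOptimalFor.map (hL : IsTwoOptimalFor c L) (hk : 0 < k)
    (hc : ∀ u ∈ L, ∀ v ∈ L, c u v = k * c' (g u) (g v)) : IsTwoOptimalFor c' (L.map g) := by
  intro e' he' f' hf' hne
  rw [← List.map_rotate, List.zip_map] at he' hf'
  obtain ⟨e, he, rfl⟩ := List.mem_map.1 he'
  obtain ⟨f, hf, rfl⟩ := List.mem_map.1 hf'
  obtain ⟨he₁, he₂⟩ := mem_of_mem_zip_rotate_one he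
  obtain ⟨hf₁, hf₂⟩ := mem_of_mem_zip_rotate_one hf
  have h := hL e he f hf fun hef => hne (hef ▸ rfl)
  rw [hc _ he₁ _ he₂, hc _ hf₁ _ hf₂, hc _ he₁ _ hf₁, hc _ he₂ _ hf₂, ← mul_add, ← mul_add] at h
  exact le_of_mul_le_mul_left h hk

end Tours

theorem two_mul_dist_le_tourCost {α : Type*} [PseudoMetricSpace α] {L : List α} {a b : α}
    (ha : a ∈ L) (hb : b ∈ L) : 2 * dist a b ≤ tourCost dist L := by
  set n := L.length
  have hn : 0 < n := List.length_pos_of_mem ha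
  let x : ℕ → α := fun i => L[i % n]'(Nat.mod_lt _ hn)
  have hx : ∀ i (hi : i < n), x i = L[i] := fun i hi => by
    simp only [x, Nat.mod_eq_of_lt hi]
  have hxn : x n = x 0 := by simp only [x, Nat.mod_self, Nat.zero_mod]
  obtain ⟨i, hi, rfl⟩ := List.getElem_of_mem ha
  obtain ⟨j, hj, rfl⟩ := List.getElem_of_mem hb
  wlog hij : i ≤ j generalizing i j
  · rw [dist_comm]; exact this j hj hb i hi ha (le_of_not_ge hij)
  rw [← hx i hi, ← hx j hj]
  calc 2 * dist (x i) (x j) ≤ dist (x 0) (x i) + dist (x i) (x j) + dist (x j) (x n) := by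
        rw [hxn]
        linarith [dist_triangle (x i) (x 0) (x j), dist_comm (x 0) (x i), dist_comm (x j) (x 0)]
    _ ≤ ∑ k ∈ Finset.Ico 0 i, dist (x k) (x (k + 1))
          + ∑ k ∈ Finset.Ico i j, dist (x k) (x (k + 1))
          + ∑ k ∈ Finset.Ico j n, dist (x k) (x (k + 1)) := by
        gcongr <;> exact dist_le_Ico_sum_dist x (by omega)
    _ = tourCost dist L := by
        rw [Finset.sum_Ico_consecutive _ (Nat.zero_le i) hij,
          Finset.sum_Ico_consecutive _ (Nat.zero_le j) hj.le, ← Finset.range_eq_Ico,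
          tourCost_eq_sum_range dist hn]

theorem Real.dist_eq_max_add_max (a b : ℝ) : dist a b = max (b - a) 0 + max (a - b) 0 := by
  rw [Real.dist_eq]
  rcases le_total a b with h | h
  · rw [abs_of_nonpos (by linarith), max_eq_left (by linarith), max_eq_right (by linarith)]; ring
  · rw [abs_of_nonneg (by linarith), max_eq_right (by linarith), max_eq_left (by linarith)]; ring

theorem disjoint_Ico_of_dist_add_dist_le {a b x y : ℝ}
    (h : dist a b + dist x y ≤ dist a x + dist b y) : Disjoint (Ico a b) (Ico x y) := by
  refine Set.disjoint_left.2 fun z ⟨haz, hzb⟩ ⟨hxz, hzy⟩ => ?_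
  simp only [Real.dist_eq] at h
  rw [abs_of_neg (by linarith), abs_of_neg (by linarith)] at h
  rcases abs_cases (a - x) with ⟨h₁, _⟩ | ⟨h₁, _⟩ <;>
    rcases abs_cases (b - y) with ⟨h₂, _⟩ | ⟨h₂, _⟩ <;> linarith

theorem sum_max_sub_le_of_pairwiseDisjoint {ι : Type*} {s : Finset ι} {a b : ι → ℝ} {m M : ℝ}
    (hmM : m ≤ M) (hab : ∀ i ∈ s, m ≤ a i ∧ b i ≤ M)
    (hdisj : (s : Set ι).PairwiseDisjoint fun i => Ico (a i) (b i)) :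
    ∑ i ∈ s, max (b i - a i) 0 ≤ M - m := by
  have hvol : ∑ i ∈ s, volume (Ico (a i) (b i)) ≤ volume (Ico m M) := by
    rw [← measure_biUnion_finset hdisj fun i _ => measurableSet_Ico]
    exact measure_mono (iUnion₂_subset fun i hi => Ico_subset_Ico (hab i hi).1 (hab i hi).2)
  have := ENNReal.toReal_mono (by simp [Real.volume_Ico]) hvol
  rw [ENNReal.toReal_sum (fun i _ => by simp [Real.volume_Ico])] at this
  simpa only [Real.volume_Ico, ENNReal.toReal_ofReal', max_eq_left (sub_nonneg.2 hmM)] using this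

theorem IsTwoOptimalFor.tourCost_le_two_mul_sub {l : List ℝ} (hl : l.Nodup)
    (h2 : IsTwoOptimalFor dist l) {m M : ℝ} (hmM : m ≤ M) (hlmM : ∀ x ∈ l, m ≤ x ∧ x ≤ M) :
    tourCost dist l ≤ 2 * (M - m) := by
  set E := l.zip (l.rotate 1)
  have hE : E.Nodup := List.Nodup.of_map Prod.fst (by rwa [List.map_fst_zip (by simp)])
  have hEmM : ∀ e ∈ E.toFinset, (m ≤ e.1 ∧ e.1 ≤ M) ∧ (m ≤ e.2 ∧ e.2 ≤ M) := fun e he =>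
    have he := mem_of_mem_zip_rotate_one (List.mem_toFinset.1 he)
    ⟨hlmM _ he.1, hlmM _ he.2⟩
  have hopt {e f : ℝ × ℝ} (he : e ∈ (E.toFinset : Set (ℝ × ℝ)))
      (hf : f ∈ (E.toFinset : Set (ℝ × ℝ))) (hef : e ≠ f) :
      dist e.1 e.2 + dist f.1 f.2 ≤ dist e.1 f.1 + dist e.2 f.2 :=
    h2 e (List.mem_toFinset.1 he) f (List.mem_toFinset.1 hf) hef
  have hup : ∑ e ∈ E.toFinset, max (e.2 - e.1) 0 ≤ M - m :=
    sum_max_sub_le_of_pairwiseDisjoint hmM (fun e he => ⟨(hEmM e he).1.1, (hEmM e he).2.2⟩)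
      fun e he f hf hef => disjoint_Ico_of_dist_add_dist_le (hopt he hf hef)
  have hdown : ∑ e ∈ E.toFinset, max (e.1 - e.2) 0 ≤ M - m := by
    refine sum_max_sub_le_of_pairwiseDisjoint hmM
      (fun e he => ⟨(hEmM e he).2.1, (hEmM e he).1.2⟩)
      fun e he f hf hef => disjoint_Ico_of_dist_add_dist_le ?_
    simpa only [dist_comm, add_comm] using hopt he hf hef
  calc tourCost dist l = ∑ e ∈ E.toFinset, dist e.1 e.2 := (List.sum_toFinset _ hE).symm
    _ = ∑ e ∈ E.toFinset, max (e.2 - e.1) 0 + ∑ e ∈ E.toFinset, max (e.1 - e.2) 0 := by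
        simp only [Real.dist_eq_max_add_max, Finset.sum_add_distrib]
    _ ≤ 2 * (M - m) := by linarith

theorem IsTwoOptimalFor.tourCost_le_of_subset {l l' : List ℝ} (hl : l.Nodup)
    (h2 : IsTwoOptimalFor dist l) (hll' : l ⊆ l') : tourCost dist l ≤ tourCost dist l' := by
  rcases eq_or_ne l [] with rfl | hne
  · refine List.sum_nonneg ?_
    simp only [List.mem_map]
    rintro _ ⟨e, -, rfl⟩
    exact dist_nonneg
  have hs : l.toFinset.Nonempty := List.toFinset_nonempty_iff _ |>.2 hne
  set m := l.toFinset.min' hs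
  set M := l.toFinset.max' hs
  have hm : m ∈ l := List.mem_toFinset.1 (l.toFinset.min'_mem hs)
  have hM : M ∈ l := List.mem_toFinset.1 (l.toFinset.max'_mem hs)
  have hmM : m ≤ M := l.toFinset.min'_le_max' hs
  calc tourCost dist l ≤ 2 * (M - m) :=
        h2.tourCost_le_two_mul_sub hl hmM fun x hx =>
          ⟨l.toFinset.min'_le x (List.mem_toFinset.2 hx),
            l.toFinset.le_max' x (List.mem_toFinset.2 hx)⟩
    _ = 2 * dist m M := by rw [Real.dist_eq, abs_sub_comm, abs_of_nonneg (sub_nonneg.2 hmM)]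
    _ ≤ tourCost dist l' := two_mul_dist_le_tourCost (hll' hm) (hll' hM)

theorem Collinear.exists_eq_smul_add {k E : Type*} [DivisionRing k] [AddCommGroup E]
    [Module k E] [Nontrivial E] {s : Set E} (h : Collinear k s) :
    ∃ (p₀ d : E) (g : E → k), d ≠ 0 ∧ ∀ p ∈ s, p = g p • d + p₀ := by
  obtain ⟨p₀, v, hv⟩ := (collinear_iff_exists_forall_eq_smul_vadd s).1 h
  obtain ⟨d, hd, hs⟩ : ∃ d : E, d ≠ 0 ∧ ∀ p ∈ s, ∃ r : k, p = r • d + p₀ := by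
    rcases eq_or_ne v 0 with rfl | hv₀
    · obtain ⟨d, hd⟩ := exists_ne (0 : E)
      exact ⟨d, hd, fun p hp => ⟨0, by simpa using hv p hp⟩⟩
    · exact ⟨v, hv₀, hv⟩
  choose! g hg using hs
  exact ⟨p₀, d, g, hd, hg⟩

theorem pdist_two_smul_add (d p₀ : ℝ × ℝ) (r s : ℝ) :
    pdist 2 (r • d + p₀) (s • d + p₀) = √(d.1 ^ 2 + d.2 ^ 2) * dist r s := by
  have h₁ : (r • d + p₀).1 - (s • d + p₀).1 = (r - s) * d.1 := by simp [sub_mul]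
  have h₂ : (r • d + p₀).2 - (s • d + p₀).2 = (r - s) * d.2 := by simp [sub_mul]
  rw [pdist, h₁, h₂, Real.rpow_two, Real.rpow_two, sq_abs, sq_abs, ← Real.sqrt_eq_rpow,
    mul_pow, mul_pow, ← mul_add, Real.sqrt_mul (sq_nonneg _), Real.sqrt_sq_eq_abs, Real.dist_eq,
    mul_comm]

theorem two_opt_degenerate_optimal (V : Finset (ℝ × ℝ))
    (hdeg : Collinear ℝ (V : Set (ℝ × ℝ)))
    (L : List (ℝ × ℝ)) (hL : IsTour V L) (h2 : IsTwoOptimal 2 L) :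
    IsOptimalTour 2 V L := by
  obtain ⟨p₀, d, g, hd, hg⟩ := hdeg.exists_eq_smul_add
  have hn : 0 < √(d.1 ^ 2 + d.2 ^ 2) := by
    obtain h | h : d.1 ≠ 0 ∨ d.2 ≠ 0 := by contrapose! hd; exact Prod.ext hd.1 hd.2
    all_goals positivity
  have hpdist : ∀ u ∈ V, ∀ v ∈ V, pdist 2 u v = √(d.1 ^ 2 + d.2 ^ 2) * dist (g u) (g v) :=
    fun u hu v hv => by rw [← pdist_two_smul_add, ← hg u hu, ← hg v hv]
  have hmem {K : List (ℝ × ℝ)} (hK : IsTour V K) (x : ℝ × ℝ) (hx : x ∈ K) : x ∈ V :=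
    hK.2 ▸ List.mem_toFinset.2 hx
  have hcost {K : List (ℝ × ℝ)} (hK : IsTour V K) :
      cycleLength 2 K = √(d.1 ^ 2 + d.2 ^ 2) * tourCost dist (K.map g) :=
    tourCost_eq_mul_tourCost_map fun u hu v hv => hpdist u (hmem hK u hu) v (hmem hK v hv)
  refine ⟨hL, fun L' hL' => ?_⟩
  rw [hcost hL, hcost hL']
  refine mul_le_mul_of_nonneg_left (IsTwoOptimalFor.tourCost_le_of_subset ?_ ?_ ?_) hn.le
  · refine hL.1.map_on fun u hu v hv huv => ?_
    rw [hg u (hmem hL u hu), hg v (hmem hL v hv), huv]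
  · exact IsTwoOptimalFor.map h2 hn fun u hu v hv =>
      hpdist u (hmem hL u hu) v (hmem hL v hv)
  · exact List.map_subset g fun x hx => List.mem_toFinset.1 (hL'.2 ▸ hmem hL x hx)
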